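/- arXiv:1609.01579 — 2 statements merged into one kernel-verified Lean document; each statement's English description precedes it below -/
import Mathlib

section
/- Let ε > 0, f ∈ C¹([0,ε)) and η, ξ, ρ ∈ C⁰([0,ε)) with η(t) > 0 and ξ(t) ≥ 0 for all t, max{f(t), ρ(t)} ≥ 0 for all t, f(0) = 0, and f'(t)·η(t) ≤ ∫₀ᵗ f(s)ξ(s) ds + f(t)ρ(t) for all t ∈ [0,ε). Then f(t) ≤ 0 for all t ∈ [0,ε). -/
open Set MeasureTheory intervalIntegral

/-!
Fix `b < ε` and bound `η ≥ m > 0`, `ξ ≤ K`, `ρ ≤ R` on the compact interval `[0, b]`, and put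
`W t = ∫₀ᵗ f⁺`. Where `f < 0` we have `ρ ≥ 0`, so `f ρ ≤ R f⁺`, and `∫₀ˢ f ξ ≤ K W s`. Hence
`f' s ≤ (K W t + R f⁺ s) / m` for `s ≤ t`, and comparing `f` with the primitive of the right-hand
side gives `f ≤ C W` on `[0, b]` with `C = (K b + R) / m`. Thus `W' = f⁺ ≤ C W` and `W 0 = 0`, so
Grönwall's inequality forces `W ≤ 0`, whence `f ≤ C W ≤ 0`.
-/

theorem mul_le_mul_max_zero {a r R : ℝ} (h : 0 ≤ max a r) (hr : r ≤ R) :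
    a * r ≤ R * max a 0 := by
  rcases le_total a 0 with ha | ha
  · rw [max_eq_right ha, mul_zero]
    rcases le_max_iff.mp h with ha' | hr'
    · rw [le_antisymm ha ha', zero_mul]
    · exact mul_nonpos_of_nonpos_of_nonneg ha hr'
  · rw [max_eq_left ha, mul_comm R]
    exact mul_le_mul_of_nonneg_left hr ha

theorem le_div_of_mul_le_of_le {a c e m : ℝ} (hm : 0 < m) (hme : m ≤ e) (hc : 0 ≤ c)
    (h : a * e ≤ c) : a ≤ c / m := by
  rw [le_div_iff₀ hm]
  rcases le_total a 0 with ha | ha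
  · exact (mul_nonpos_of_nonpos_of_nonneg ha hm.le).trans hc
  · exact (mul_le_mul_of_nonneg_left hme ha).trans h

theorem integral_mul_le_mul_integral {f g ξ : ℝ → ℝ} {a s t K : ℝ} (has : a ≤ s) (hst : s ≤ t)
    (hf : ContinuousOn f (Icc a t)) (hξ : ContinuousOn ξ (Icc a t)) (hg : Continuous g)
    (hfg : ∀ x ∈ Icc a t, f x ≤ g x) (hg0 : ∀ x ∈ Icc a t, 0 ≤ g x)
    (hξ0 : ∀ x ∈ Icc a t, 0 ≤ ξ x) (hξK : ∀ x ∈ Icc a t, ξ x ≤ K) :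
    ∫ x in a..s, f x * ξ x ≤ K * ∫ x in a..t, g x := by
  have hsub : Icc a s ⊆ Icc a t := Icc_subset_Icc_right hst
  have hat : a ∈ Icc a t := ⟨le_rfl, has.trans hst⟩
  have hK : 0 ≤ K := (hξ0 a hat).trans (hξK a hat)
  have hfξ : IntervalIntegrable (fun x => f x * ξ x) volume a s :=
    ((hf.mul hξ).mono hsub).intervalIntegrable_of_Icc has
  calc ∫ x in a..s, f x * ξ x ≤ ∫ x in a..s, K * g x := by
        refine integral_mono_on has hfξ ((continuous_const.mul hg).intervalIntegrable _ _) ?_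
        intro x hx
        have hx' := hsub hx
        calc f x * ξ x ≤ g x * ξ x := mul_le_mul_of_nonneg_right (hfg x hx') (hξ0 x hx')
          _ ≤ g x * K := mul_le_mul_of_nonneg_left (hξK x hx') (hg0 x hx')
          _ = K * g x := mul_comm _ _
    _ ≤ ∫ x in a..t, K * g x := by
        refine integral_mono_interval le_rfl has hst ?_
          ((continuous_const.mul hg).intervalIntegrable _ _)
        filter_upwards [ae_restrict_mem measurableSet_Ioc] with x hx
        exact mul_nonneg hK (hg0 x (Ioc_subset_Icc_self hx))
    _ = K * ∫ x in a..t, g x := integral_const_mul K g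

theorem le_of_deriv_right_le_add_mul {f f' g : ℝ → ℝ} {a t A B : ℝ}
    (hf : ContinuousOn f (Icc a t)) (hf' : ∀ x ∈ Ico a t, HasDerivWithinAt f (f' x) (Ici x) x)
    (hg : Continuous g) (bound : ∀ x ∈ Ico a t, f' x ≤ A + B * g x) (hat : a ≤ t) :
    f t ≤ f a + A * (t - a) + B * ∫ x in a..t, g x := by
  have hW : ∀ x, HasDerivAt (fun y => f a + A * (y - a) + B * ∫ s in a..y, g s) (A + B * g x) x :=
    fun x => by
      have := ((((hasDerivAt_id x).sub_const a).const_mul A).const_add (f a)).add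
        ((hg.integral_hasStrictDerivAt a x).hasDerivAt.const_mul B)
      rwa [mul_one] at this
  refine image_le_of_deriv_right_le_deriv_boundary hf hf' (by simp)
    (fun x _ => (hW x).continuousAt.continuousWithinAt) (fun x _ => (hW x).hasDerivWithinAt)
    bound ⟨hat, le_rfl⟩

theorem integral_nonpos_of_le_mul_integral {g : ℝ → ℝ} {a b C : ℝ} (hg : Continuous g)
    (hle : ∀ t ∈ Ico a b, g t ≤ C * ∫ s in a..t, g s) :
    ∀ t ∈ Icc a b, ∫ s in a..t, g s ≤ 0 := by
  have hW : ∀ x, HasDerivAt (fun t => ∫ s in a..t, g s) (g x) x :=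
    fun x => (hg.integral_hasStrictDerivAt a x).hasDerivAt
  intro t ht
  refine (le_gronwallBound_of_liminf_deriv_right_le
    (fun x _ => (hW x).continuousAt.continuousWithinAt)
    (fun x _ _ hr => (hW x).hasDerivWithinAt.liminf_right_slope_le hr)
    (le_of_eq integral_same) (fun x hx => by rw [add_zero]; exact hle x hx) t ht).trans_eq
    (gronwallBound_ε0_δ0 C _)

theorem nonpos_of_le_mul_integral_max_zero {f g : ℝ → ℝ} {a b C : ℝ} (hC : 0 ≤ C)
    (hg : Continuous g) (hgf : EqOn g (fun x => max (f x) 0) (Icc a b))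
    (hfg : ∀ t ∈ Icc a b, f t ≤ C * ∫ s in a..t, g s) :
    ∀ t ∈ Icc a b, f t ≤ 0 := by
  have hW0 : ∀ t ∈ Icc a b, 0 ≤ C * ∫ s in a..t, g s := fun t ht =>
    mul_nonneg hC <| integral_nonneg ht.1 fun x hx =>
      (hgf ⟨hx.1, hx.2.trans ht.2⟩).symm ▸ le_max_right _ _
  have hW : ∀ t ∈ Icc a b, ∫ s in a..t, g s ≤ 0 :=
    integral_nonpos_of_le_mul_integral hg fun t ht =>
      (hgf (Ico_subset_Icc_self ht)).trans_le
        (max_le (hfg t (Ico_subset_Icc_self ht)) (hW0 t (Ico_subset_Icc_self ht)))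
  exact fun t ht => (hfg t ht).trans (mul_nonpos_of_nonneg_of_nonpos hC (hW t ht))

theorem le_mul_integral_of_deriv_mul_le {f f' g η ξ ρ : ℝ → ℝ} {b m K R : ℝ}
    (hf : ContinuousOn f (Icc 0 b)) (hf' : ∀ x ∈ Ico 0 b, HasDerivWithinAt f (f' x) (Ici x) x)
    (hg : Continuous g) (hgf : EqOn g (fun x => max (f x) 0) (Icc 0 b))
    (hξ : ContinuousOn ξ (Icc 0 b)) (hm : 0 < m) (hηm : ∀ x ∈ Ico 0 b, m ≤ η x)
    (hξ0 : ∀ x ∈ Icc 0 b, 0 ≤ ξ x) (hξK : ∀ x ∈ Icc 0 b, ξ x ≤ K)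
    (hR : 0 ≤ R) (hρR : ∀ x ∈ Ico 0 b, ρ x ≤ R) (hmax : ∀ x ∈ Ico 0 b, 0 ≤ max (f x) (ρ x))
    (hf0 : f 0 = 0) (hineq : ∀ x ∈ Ico 0 b, f' x * η x ≤ (∫ s in 0..x, f s * ξ s) + f x * ρ x) :
    ∀ t ∈ Icc 0 b, f t ≤ (K * b + R) / m * ∫ s in 0..t, g s := by
  intro t ht
  set W := ∫ s in 0..t, g s
  have hsub : Icc 0 t ⊆ Icc 0 b := Icc_subset_Icc_right ht.2
  have hK : 0 ≤ K := (hξ0 0 ⟨le_rfl, ht.1.trans ht.2⟩).trans (hξK 0 ⟨le_rfl, ht.1.trans ht.2⟩)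
  have hg0 : ∀ x ∈ Icc 0 b, 0 ≤ g x := fun x hx => (hgf hx).symm ▸ le_max_right _ _
  have hW : 0 ≤ W := integral_nonneg ht.1 fun x hx => hg0 x (hsub hx)
  have hderiv : ∀ s ∈ Ico 0 t, f' s ≤ K * W / m + R / m * g s := by
    intro s hs
    have hs' : s ∈ Ico 0 b := ⟨hs.1, hs.2.trans_le ht.2⟩
    have hξf : ∫ x in 0..s, f x * ξ x ≤ K * W :=
      integral_mul_le_mul_integral hs.1 hs.2.le (hf.mono hsub) (hξ.mono hsub) hg
        (fun x hx => (hgf (hsub hx)).symm ▸ le_max_left _ _) (fun x hx => hg0 x (hsub hx))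
        (fun x hx => hξ0 x (hsub hx)) (fun x hx => hξK x (hsub hx))
    have hfρ : f s * ρ s ≤ R * g s :=
      (hgf (Ico_subset_Icc_self hs')).symm ▸ mul_le_mul_max_zero (hmax s hs') (hρR s hs')
    have hrhs : 0 ≤ K * W + R * g s :=
      add_nonneg (mul_nonneg hK hW) (mul_nonneg hR (hg0 s (Ico_subset_Icc_self hs')))
    calc f' s ≤ (K * W + R * g s) / m :=
          le_div_of_mul_le_of_le hm (hηm s hs') hrhs ((hineq s hs').trans (by linarith))
      _ = K * W / m + R / m * g s := by ring
  calc f t ≤ f 0 + K * W / m * (t - 0) + R / m * W :=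
        le_of_deriv_right_le_add_mul (hf.mono hsub)
          (fun x hx => hf' x ⟨hx.1, hx.2.trans_le ht.2⟩) hg hderiv ht.1
    _ = (K * t + R) / m * W := by rw [hf0]; ring
    _ ≤ (K * b + R) / m * W := by gcongr; exact ht.2

theorem stmt_0_general (ε : ℝ) (f f' η ξ ρ : ℝ → ℝ)
    (hf : ∀ t ∈ Ico (0:ℝ) ε, HasDerivWithinAt f (f' t) (Ico (0:ℝ) ε) t)
    (hη : ContinuousOn η (Ico (0:ℝ) ε))
    (hξ : ContinuousOn ξ (Ico (0:ℝ) ε))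
    (hρ : ContinuousOn ρ (Ico (0:ℝ) ε))
    (hηpos : ∀ t ∈ Ico (0:ℝ) ε, 0 < η t)
    (hξnn : ∀ t ∈ Ico (0:ℝ) ε, 0 ≤ ξ t)
    (hmax : ∀ t ∈ Ico (0:ℝ) ε, 0 ≤ max (f t) (ρ t))
    (hf0 : f 0 = 0)
    (hineq : ∀ t ∈ Ico (0:ℝ) ε,
      f' t * η t ≤ (∫ s in (0:ℝ)..t, f s * ξ s) + f t * ρ t) :
    ∀ t ∈ Ico (0:ℝ) ε, f t ≤ 0 := by
  intro t ht
  obtain ⟨b, htb, hbε⟩ := exists_between ht.2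
  have hb : 0 ≤ b := ht.1.trans htb.le
  have hsub : Icc 0 b ⊆ Ico 0 ε := Icc_subset_Ico_right hbε
  have hsub' : Ico 0 b ⊆ Ico 0 ε := Ico_subset_Icc_self.trans hsub
  have hfc : ContinuousOn f (Icc 0 b) := fun x hx => (hf x (hsub hx)).continuousWithinAt.mono hsub
  obtain ⟨m, hm, hηm⟩ :=
    isCompact_Icc.exists_forall_le' (hη.mono hsub) fun x hx => hηpos x (hsub hx)
  obtain ⟨K, hξK⟩ := isCompact_Icc.bddAbove_image (hξ.mono hsub)
  obtain ⟨R, hρR⟩ := isCompact_Icc.bddAbove_image (hρ.mono hsub)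
  -- `f⁺` extended off `[0, b]` so that its primitive is differentiable everywhere
  set g : ℝ → ℝ := fun x => max (f (projIcc 0 b hb x)) 0
  have hg : Continuous g := (hfc.comp_continuous (continuous_subtype_val.comp continuous_projIcc)
    fun x => (projIcc 0 b hb x).2).max continuous_const
  have hgf : EqOn g (fun x => max (f x) 0) (Icc 0 b) := fun x hx => by
    simp only [g, projIcc_of_mem hb hx]
  have hfW := le_mul_integral_of_deriv_mul_le hfc
    (fun x hx => (hf x (hsub' hx)).mono_of_mem_nhdsWithin (Ico_mem_nhdsGE_of_mem (hsub' hx)))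
    hg hgf (hξ.mono hsub) hm (fun x hx => hηm x (Ico_subset_Icc_self hx))
    (fun x hx => hξnn x (hsub hx))
    (fun x hx => (hξK (mem_image_of_mem ξ hx)).trans (le_max_left K 0)) (le_max_right R 0)
    (fun x hx => (hρR (mem_image_of_mem ρ (Ico_subset_Icc_self hx))).trans (le_max_left R 0))
    (fun x hx => hmax x (hsub' hx)) hf0 (fun x hx => hineq x (hsub' hx))
  exact nonpos_of_le_mul_integral_max_zero (by positivity) hg hgf hfW t ⟨ht.1, htb.le⟩

/-- Calculus comparison lemma (Lemma 3.2): if `f ∈ C¹([0,ε))`, `η, ξ, ρ ∈ C⁰([0,ε))`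
with `η > 0`, `ξ ≥ 0`, `max {f, ρ} ≥ 0`, `f 0 = 0`, and
`f'(t) η(t) ≤ ∫₀ᵗ f ξ + f(t) ρ(t)` on `[0,ε)`, then `f ≤ 0` on `[0,ε)`. -/
theorem stmt_0 (ε : ℝ) (hε : 0 < ε) (f f' η ξ ρ : ℝ → ℝ)
    (hf : ∀ t ∈ Ico (0:ℝ) ε, HasDerivWithinAt f (f' t) (Ico (0:ℝ) ε) t)
    (hf' : ContinuousOn f' (Ico (0:ℝ) ε))
    (hη : ContinuousOn η (Ico (0:ℝ) ε))
    (hξ : ContinuousOn ξ (Ico (0:ℝ) ε))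
    (hρ : ContinuousOn ρ (Ico (0:ℝ) ε))
    (hηpos : ∀ t ∈ Ico (0:ℝ) ε, 0 < η t)
    (hξnn : ∀ t ∈ Ico (0:ℝ) ε, 0 ≤ ξ t)
    (hmax : ∀ t ∈ Ico (0:ℝ) ε, 0 ≤ max (f t) (ρ t))
    (hf0 : f 0 = 0)
    (hineq : ∀ t ∈ Ico (0:ℝ) ε,
      f' t * η t ≤ (∫ s in (0:ℝ)..t, f s * ξ s) + f t * ρ t) :
    ∀ t ∈ Ico (0:ℝ) ε, f t ≤ 0 :=
  stmt_0_general ε f f' η ξ ρ hf hη hξ hρ hηpos hξnn hmax hf0 hineq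
end

section
/- Let ε > 0 and suppose f ∈ C¹([0,ε)), η, ξ, ρ ∈ C⁰([0,ε)) satisfy η > 0, ξ ≥ 0, max{f, ρ} ≥ 0 pointwise, f(0) = 0, and f'(t)η(t) ≤ ∫₀ᵗ f(s)ξ(s) ds + f(t)ρ(t) for all t. Then there exists δ ∈ (0,ε) such that f ≤ 0 on [0,δ]; more precisely, if C > 0 bounds both (1/η(t))∫₀ᵗ ξ(s)ds and ρ(t)/η(t) on [0,ε/2], then f ≤ 0 on [0,δ] for any δ ∈ (0,ε/2] with 2Cδ < 1. -/
/-!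
Suppose `f` is positive somewhere on `[0, δ]` and let `M > 0` be its maximum there, attained at
`t₀`. The integral term is at most `M ∫₀ᵗ ξ ≤ C M η(t)`, and `f ρ ≤ C M η` (if `ρ < 0` then
`f ≥ 0`, so `f ρ ≤ 0`); hence `f' ≤ 2 C M` on `[0, δ]`. The mean value theorem on `[0, t₀]` then
gives `M = f t₀ ≤ 2 C M δ < M`.
-/

open Set MeasureTheory intervalIntegral

theorem mul_le_mul_of_max_nonneg {a b M c : ℝ} (hab : 0 ≤ max a b) (ha : a ≤ M) (hb : b ≤ c)
    (hM : 0 ≤ M) (hc : 0 ≤ c) : a * b ≤ M * c := by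
  rcases lt_or_ge b 0 with hb0 | hb0
  · have ha0 : 0 ≤ a := by
      rcases le_max_iff.1 hab with h | h <;> linarith
    nlinarith
  · nlinarith

theorem integral_mul_le_mul_integral_s2 {f g : ℝ → ℝ} {a b M : ℝ} (hab : a ≤ b)
    (hfg : IntervalIntegrable (fun u => f u * g u) volume a b)
    (hg : IntervalIntegrable g volume a b)
    (hg0 : ∀ u ∈ Icc a b, 0 ≤ g u) (hfM : ∀ u ∈ Icc a b, f u ≤ M) :
    ∫ u in a..b, f u * g u ≤ M * ∫ u in a..b, g u := by
  rw [← intervalIntegral.integral_const_mul]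
  exact integral_mono_on hab hfg (hg.const_mul M) fun u hu =>
    mul_le_mul_of_nonneg_right (hfM u hu) (hg0 u hu)

theorem nonpos_of_deriv_le_mul_bound {f f' : ℝ → ℝ} {δ K : ℝ} (hδ : 0 ≤ δ) (hKδ : K * δ < 1)
    (hfc : ContinuousOn f (Icc 0 δ)) (hf : ∀ x ∈ Ioo 0 δ, HasDerivAt f (f' x) x)
    (hf0 : f 0 = 0)
    (hbound : ∀ M, 0 < M → (∀ s ∈ Icc 0 δ, f s ≤ M) → ∀ s ∈ Ioo 0 δ, f' s ≤ K * M) :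
    ∀ t ∈ Icc 0 δ, f t ≤ 0 := by
  obtain ⟨t₀, ht₀, hmax⟩ := isCompact_Icc.exists_isMaxOn (nonempty_Icc.2 hδ) hfc
  intro t ht
  by_contra! hpos
  have hM : 0 < f t₀ := hpos.trans_le (hmax ht)
  have ht₀pos : 0 < t₀ := ht₀.1.lt_of_ne (by rintro rfl; rw [hf0] at hM; exact hM.false)
  obtain ⟨c, hc, hslope⟩ := exists_hasDerivAt_eq_slope f f' ht₀pos
    (hfc.mono (Icc_subset_Icc_right ht₀.2)) fun x hx => hf x ⟨hx.1, hx.2.trans_le ht₀.2⟩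
  rw [hf0, sub_zero, sub_zero, eq_div_iff ht₀pos.ne'] at hslope
  have hc' : f' c ≤ K * f t₀ := hbound _ hM hmax c ⟨hc.1, hc.2.trans_le ht₀.2⟩
  have hKt₀ : K * t₀ < 1 := by
    rcases lt_or_ge K 0 with hK | hK
    · nlinarith
    · nlinarith [ht₀.2]
  nlinarith [mul_le_mul_of_nonneg_right hc' ht₀pos.le]

theorem deriv_le_of_integral_ineq {f f' η ξ ρ : ℝ → ℝ} {s C M : ℝ} (hs : 0 ≤ s)
    (hfc : ContinuousOn f (Icc 0 s)) (hξc : ContinuousOn ξ (Icc 0 s)) (hηs : 0 < η s)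
    (hξnn : ∀ u ∈ Icc 0 s, 0 ≤ ξ u) (hmax : 0 ≤ max (f s) (ρ s))
    (hineq : f' s * η s ≤ (∫ u in (0:ℝ)..s, f u * ξ u) + f s * ρ s)
    (hC : 0 ≤ C) (hCξ : (1 / η s) * (∫ u in (0:ℝ)..s, ξ u) ≤ C) (hCρ : ρ s / η s ≤ C)
    (hM : 0 ≤ M) (hfM : ∀ u ∈ Icc 0 s, f u ≤ M) :
    f' s ≤ 2 * C * M := by
  rw [one_div, inv_mul_le_iff₀ hηs, mul_comm] at hCξ
  rw [div_le_iff₀ hηs] at hCρ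
  have hcont : ∀ {g : ℝ → ℝ}, ContinuousOn g (Icc 0 s) → IntervalIntegrable g volume 0 s :=
    fun hg => (uIcc_of_le hs ▸ hg).intervalIntegrable
  have hint : ∫ u in (0:ℝ)..s, f u * ξ u ≤ M * (C * η s) :=
    (integral_mul_le_mul_integral_s2 hs (hcont (hfc.mul hξc)) (hcont hξc) hξnn hfM).trans
      (mul_le_mul_of_nonneg_left hCξ hM)
  have hfρ : f s * ρ s ≤ M * (C * η s) :=
    mul_le_mul_of_max_nonneg hmax (hfM s ⟨hs, le_rfl⟩) hCρ hM (by positivity)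
  have : f' s * η s ≤ 2 * C * M * η s := by linarith
  exact le_of_mul_le_mul_right this hηs

theorem stmt_2_general (ε : ℝ) (hε : 0 < ε) (f f' η ξ ρ : ℝ → ℝ)
    (hf : ∀ t ∈ Ico (0:ℝ) ε, HasDerivWithinAt f (f' t) (Ico (0:ℝ) ε) t)
    (hξ : ContinuousOn ξ (Ico (0:ℝ) ε))
    (hηpos : ∀ t ∈ Ico (0:ℝ) ε, 0 < η t)
    (hξnn : ∀ t ∈ Ico (0:ℝ) ε, 0 ≤ ξ t)
    (hmax : ∀ t ∈ Ico (0:ℝ) ε, 0 ≤ max (f t) (ρ t))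
    (hf0 : f 0 = 0)
    (hineq : ∀ t ∈ Ico (0:ℝ) ε,
      f' t * η t ≤ (∫ s in (0:ℝ)..t, f s * ξ s) + f t * ρ t)
    (C : ℝ) (hC : 0 < C)
    (hCbound : ∀ t ∈ Icc (0:ℝ) (ε/2),
      (1 / η t) * (∫ s in (0:ℝ)..t, ξ s) ≤ C ∧ ρ t / η t ≤ C) :
    (∀ δ, 0 < δ → δ ≤ ε/2 → 2 * C * δ < 1 → ∀ t ∈ Icc (0:ℝ) δ, f t ≤ 0) ∧
      ∃ δ ∈ Ioo (0:ℝ) ε, ∀ t ∈ Icc (0:ℝ) δ, f t ≤ 0 := by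
  have hfc : ContinuousOn f (Ico 0 ε) := fun x hx => (hf x hx).continuousWithinAt
  have key : ∀ δ, 0 < δ → δ ≤ ε/2 → 2 * C * δ < 1 → ∀ t ∈ Icc (0:ℝ) δ, f t ≤ 0 := by
    intro δ hδ hδε hCδ
    have hsub : ∀ {s}, s ≤ δ → Icc 0 s ⊆ Ico 0 ε := fun hs _ hx =>
      ⟨hx.1, by linarith [hx.2]⟩
    refine nonpos_of_deriv_le_mul_bound hδ.le hCδ (hfc.mono (hsub le_rfl))
      (fun x hx => (hf x (hsub le_rfl (Ioo_subset_Icc_self hx))).hasDerivAt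
        (Ico_mem_nhds hx.1 (by linarith [hx.2]))) hf0 fun M hM hfM s hs => ?_
    have hsε := hsub le_rfl (Ioo_subset_Icc_self hs)
    obtain ⟨hCξ, hCρ⟩ := hCbound s ⟨hs.1.le, by linarith [hs.2]⟩
    exact deriv_le_of_integral_ineq hs.1.le (hfc.mono (hsub hs.2.le)) (hξ.mono (hsub hs.2.le))
      (hηpos s hsε) (fun u hu => hξnn u (hsub hs.2.le hu)) (hmax s hsε) (hineq s hsε) hC.le
      hCξ hCρ hM.le fun u hu => hfM u ⟨hu.1, hu.2.trans hs.2.le⟩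
  have hδpos : 0 < min (ε/2) (1/(4*C)) := lt_min (by linarith) (by positivity)
  refine ⟨key, min (ε/2) (1/(4*C)), ⟨hδpos, by linarith [min_le_left (ε/2) (1/(4*C))]⟩,
    key _ hδpos (min_le_left _ _) ?_⟩
  calc 2 * C * min (ε/2) (1/(4*C)) ≤ 2 * C * (1/(4*C)) := by gcongr; exact min_le_right _ _
    _ < 1 := by field_simp; norm_num

/-- Claim 1 in the proof of Lemma 3.2 (short-time version): if `C > 0` bounds both
`(1/η(t)) ∫₀ᵗ ξ` and `ρ(t)/η(t)` on `[0,ε/2]`, then `f ≤ 0` on `[0,δ]` for any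
`δ ∈ (0,ε/2]` with `2Cδ < 1`; in particular there exists `δ ∈ (0,ε)` with `f ≤ 0` on `[0,δ]`. -/
theorem stmt_2 (ε : ℝ) (hε : 0 < ε) (f f' η ξ ρ : ℝ → ℝ)
    (hf : ∀ t ∈ Ico (0:ℝ) ε, HasDerivWithinAt f (f' t) (Ico (0:ℝ) ε) t)
    (hf' : ContinuousOn f' (Ico (0:ℝ) ε))
    (hη : ContinuousOn η (Ico (0:ℝ) ε))
    (hξ : ContinuousOn ξ (Ico (0:ℝ) ε))
    (hρ : ContinuousOn ρ (Ico (0:ℝ) ε))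
    (hηpos : ∀ t ∈ Ico (0:ℝ) ε, 0 < η t)
    (hξnn : ∀ t ∈ Ico (0:ℝ) ε, 0 ≤ ξ t)
    (hmax : ∀ t ∈ Ico (0:ℝ) ε, 0 ≤ max (f t) (ρ t))
    (hf0 : f 0 = 0)
    (hineq : ∀ t ∈ Ico (0:ℝ) ε,
      f' t * η t ≤ (∫ s in (0:ℝ)..t, f s * ξ s) + f t * ρ t)
    (C : ℝ) (hC : 0 < C)
    (hCbound : ∀ t ∈ Icc (0:ℝ) (ε/2),
      (1 / η t) * (∫ s in (0:ℝ)..t, ξ s) ≤ C ∧ ρ t / η t ≤ C) :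
    (∀ δ, 0 < δ → δ ≤ ε/2 → 2 * C * δ < 1 → ∀ t ∈ Icc (0:ℝ) δ, f t ≤ 0) ∧
      ∃ δ ∈ Ioo (0:ℝ) ε, ∀ t ∈ Icc (0:ℝ) δ, f t ≤ 0 :=
  stmt_2_general ε hε f f' η ξ ρ hf hξ hηpos hξnn hmax hf0 hineq C hC hCbound
end
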